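/- If w : [0,T] → ℝ is differentiable, |w(0)| ≤ 1/2, and w'(t) = c(t)·(1/2 − w(t)) − d(t)·(1/2 + w(t)) for continuous nonnegative functions c, d : [0,T] → ℝ, then |w(t)| ≤ 1/2 for all t ∈ [0,T]. -/

import Mathlib

/-!
Only the sign of `w'` where `w` lies outside `[-1/2, 1/2]` matters: if `w > 1/2` then both
`c (1/2 - w)` and `-d (1/2 + w)` are nonpositive, so `w` cannot increase there, and symmetrically
below `-1/2`. A function that cannot increase above a level it starts below stays below it.
-/

open Set

/-- Strict fences `M + ε (x - a + 1)` reduce this to `image_le_of_deriv_right_lt_deriv_boundary'`;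
then let `ε → 0`. -/
theorem image_le_of_deriv_right_nonpos_of_lt {f f' : ℝ → ℝ} {a b M : ℝ}
    (hf : ContinuousOn f (Icc a b)) (hf' : ∀ x ∈ Ico a b, HasDerivWithinAt f (f' x) (Ici x) x)
    (ha : f a ≤ M) (bound : ∀ x ∈ Ico a b, M < f x → f' x ≤ 0) :
    ∀ ⦃x⦄, x ∈ Icc a b → f x ≤ M := by
  intro x hx
  have fence : ∀ ε > 0, f x ≤ M + ε * (x - a + 1) := by
    intro ε hε
    refine image_le_of_deriv_right_lt_deriv_boundary' hf hf'
      (B := fun y => M + ε * (y - a + 1)) (B' := fun _ => ε)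
      (by simp only [sub_self, zero_add, mul_one]; linarith)
      (by fun_prop) (fun y _ => ?_) (fun y hy hfy => ?_) hx
    · simpa using (((hasDerivAt_id y).sub_const a).add_const 1 |>.const_mul ε
        |>.const_add M).hasDerivWithinAt
    · have hεy : 0 < ε * (y - a + 1) := mul_pos hε (by linarith [hy.1])
      linarith [bound y hy (by linarith)]
  refine le_of_forall_pos_le_add fun ε hε => ?_
  have hlen : 0 < x - a + 1 := by linarith [hx.1]
  simpa [div_mul_cancel₀ _ hlen.ne'] using fence (ε / (x - a + 1)) (div_pos hε hlen)

theorem image_ge_of_deriv_right_nonneg_of_gt {f f' : ℝ → ℝ} {a b m : ℝ}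
    (hf : ContinuousOn f (Icc a b)) (hf' : ∀ x ∈ Ico a b, HasDerivWithinAt f (f' x) (Ici x) x)
    (ha : m ≤ f a) (bound : ∀ x ∈ Ico a b, f x < m → 0 ≤ f' x) :
    ∀ ⦃x⦄, x ∈ Icc a b → m ≤ f x := by
  intro x hx
  have := image_le_of_deriv_right_nonpos_of_lt (f' := fun x => -f' x) hf.neg
    (fun x hx => (hf' x hx).neg) (neg_le_neg ha)
    (fun x hx hfx => neg_nonpos.2 (bound x hx (neg_lt_neg_iff.1 hfx))) hx
  exact neg_le_neg_iff.1 this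

theorem mapsTo_Icc_of_deriv_right_inward {f f' : ℝ → ℝ} {a b m M : ℝ}
    (hf : ContinuousOn f (Icc a b)) (hf' : ∀ x ∈ Ico a b, HasDerivWithinAt f (f' x) (Ici x) x)
    (ha : f a ∈ Icc m M) (above : ∀ x ∈ Ico a b, M < f x → f' x ≤ 0)
    (below : ∀ x ∈ Ico a b, f x < m → 0 ≤ f' x) :
    MapsTo f (Icc a b) (Icc m M) := fun _ hx =>
  ⟨image_ge_of_deriv_right_nonneg_of_gt hf hf' ha.1 below hx,
    image_le_of_deriv_right_nonpos_of_lt hf hf' ha.2 above hx⟩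

theorem stmt_1_general (T : ℝ) (w c d : ℝ → ℝ)
    (hc0 : ∀ t ∈ Set.Icc (0:ℝ) T, 0 ≤ c t)
    (hd0 : ∀ t ∈ Set.Icc (0:ℝ) T, 0 ≤ d t)
    (hw : ∀ t ∈ Set.Icc (0:ℝ) T,
      HasDerivAt w (c t * (1/2 - w t) - d t * (1/2 + w t)) t)
    (hw0 : |w 0| ≤ 1/2) :
    ∀ t ∈ Set.Icc (0:ℝ) T, |w t| ≤ 1/2 := by
  intro t ht
  refine abs_le.2 <| mapsTo_Icc_of_deriv_right_inward
    (fun s hs => (hw s hs).continuousAt.continuousWithinAt)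
    (fun s hs => (hw s (Ico_subset_Icc_self hs)).hasDerivWithinAt) (abs_le.1 hw0)
    (fun s hs hws => ?_) (fun s hs hws => ?_) ht
  all_goals nlinarith [hc0 s (Ico_subset_Icc_self hs), hd0 s (Ico_subset_Icc_self hs)]

theorem stmt_1 (T : ℝ) (hT : 0 < T) (w c d : ℝ → ℝ)
    (hc : ContinuousOn c (Set.Icc 0 T)) (hd : ContinuousOn d (Set.Icc 0 T))
    (hc0 : ∀ t ∈ Set.Icc (0:ℝ) T, 0 ≤ c t)
    (hd0 : ∀ t ∈ Set.Icc (0:ℝ) T, 0 ≤ d t)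
    (hw : ∀ t ∈ Set.Icc (0:ℝ) T,
      HasDerivAt w (c t * (1/2 - w t) - d t * (1/2 + w t)) t)
    (hw0 : |w 0| ≤ 1/2) :
    ∀ t ∈ Set.Icc (0:ℝ) T, |w t| ≤ 1/2 :=
  stmt_1_general T w c d hc0 hd0 hw hw0
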